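/- Let R be a commutative QF ring (noetherian and injective as a module over itself), let C be an R-coalgebra that is projective as an R-module, and let 0 → N →ι M →π L → 0 be an exact sequence of left C^*-modules (C^* with the convolution product). If every element of N and every element of L is C-rational, and if for every l ∈ L the left ideal (0:l) = {g ∈ C^* : g·l = 0} of C^* is finitely generated as a left C^*-module, then every element of M is C-rational. -/
import Mathlib


open TensorProduct

/-- The convolution product on `C^* = Hom_R(C,R)`: `(f ⋆ g)(c) = Σ f(c₁) g(c₂)`. -/
noncomputable def convProd {R C : Type*} [CommRing R] [AddCommGroup C] [Module R C]
    [Coalgebra R C] (f g : Module.Dual R C) : Module.Dual R C :=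
  (LinearMap.mul' R R) ∘ₗ (TensorProduct.map f g) ∘ₗ Coalgebra.comul

/-- A left module structure over the convolution algebra `C^*` on an `R`-module `M`,
given by an `R`-bilinear action compatible with the convolution product and with the
unit `ε_C` of `C^*`. -/
def IsDualModuleAction {R C M : Type*} [CommRing R] [AddCommGroup C] [Module R C]
    [Coalgebra R C] [AddCommGroup M] [Module R M]
    (act : Module.Dual R C →ₗ[R] M →ₗ[R] M) : Prop :=
  (∀ f g : Module.Dual R C, act (convProd f g) = (act f) ∘ₗ (act g)) ∧
  act (Coalgebra.counit (R := R) (A := C)) = LinearMap.id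

/-- An element `m` of a left `C^*`-module is `C`-rational if there are finitely many
`m_i` and `c_i` with `g • m = Σ g(c_i) • m_i` for all `g ∈ C^*`. -/
def IsRationalElem {R C M : Type*} [CommRing R] [AddCommGroup C] [Module R C]
    [Coalgebra R C] [AddCommGroup M] [Module R M]
    (act : Module.Dual R C →ₗ[R] M →ₗ[R] M) (m : M) : Prop :=
  ∃ (n : ℕ) (ms : Fin n → M) (cs : Fin n → C),
    ∀ g : Module.Dual R C, act g m = ∑ i, g (cs i) • ms i

/-- `(h ⋆ g)(c) = h((id ⊗ g)(Δ c))`. -/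
lemma convProd_apply_eq {R C : Type*} [CommRing R] [AddCommGroup C] [Module R C]
    [Coalgebra R C] (h g : Module.Dual R C) (c : C) :
    convProd h g c
      = h ((TensorProduct.rid R C)
          ((LinearMap.lTensor C g) (Coalgebra.comul (R := R) c))) := by
  have key : (LinearMap.mul' R R) ∘ₗ (TensorProduct.map h g)
      = h ∘ₗ ((TensorProduct.rid R C).toLinearMap ∘ₗ (LinearMap.lTensor C g)) := by
    apply TensorProduct.ext'
    intro a b
    simp [mul_comm]
  have := congrArg (fun F : C ⊗[R] C →ₗ[R] R => F (Coalgebra.comul (R := R) (A := C) c)) key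
  simpa [convProd] using this

/-- Extension lemma over a self-injective ring: a functional vanishing on `W ⊓ D`
can be replaced, keeping its values on `W`, by one vanishing on all of `D`. -/
lemma exists_extension_vanishing {R Q : Type*} [CommRing R] [Module.Injective R R]
    [AddCommGroup Q] [Module R Q] (W D : Submodule R Q)
    (H : Q →ₗ[R] R) (hH : ∀ x ∈ W ⊓ D, H x = 0) :
    ∃ H' : Q →ₗ[R] R, (∀ x ∈ W, H' x = H x) ∧ (∀ x ∈ D, H' x = 0) := by
  classical
  set φ : ↥W →ₗ[R] R := H ∘ₗ W.subtype with hφdef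
  set m1 : ↥W →ₗ[R] Q ⧸ D := D.mkQ ∘ₗ W.subtype with hm1def
  have hker : LinearMap.ker m1 ≤ LinearMap.ker φ := by
    intro x hx
    have hx0 : m1 x = 0 := LinearMap.mem_ker.mp hx
    have hxD : (x : Q) ∈ D := by
      rw [hm1def] at hx0
      simpa [Submodule.Quotient.mk_eq_zero] using hx0
    exact LinearMap.mem_ker.mpr (hH x ⟨x.2, hxD⟩)
  set φbar := (LinearMap.ker m1).liftQ φ hker with hφbardef
  set i1 := (LinearMap.ker m1).liftQ m1 (le_refl _) with hi1def
  have hi1 : Function.Injective i1 := by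
    rw [← LinearMap.ker_eq_bot, hi1def, Submodule.ker_liftQ_eq_bot' _ _ rfl]
  obtain ⟨E, hE⟩ := Module.Injective.extension_property R R _ _ i1 hi1 φbar
  refine ⟨E ∘ₗ D.mkQ, ?_, ?_⟩
  · intro x hx
    have h2 : D.mkQ x = i1 (Submodule.Quotient.mk (⟨x, hx⟩ : ↥W)) := by
      rw [hi1def, Submodule.liftQ_apply]
      rfl
    rw [LinearMap.comp_apply, h2, ← LinearMap.comp_apply E i1, hE, hφbardef,
      Submodule.liftQ_apply]
    rfl
  · intro x hx
    have h2 : D.mkQ x = 0 := (Submodule.Quotient.mk_eq_zero D).mpr hx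
    rw [LinearMap.comp_apply, h2, map_zero]

theorem rational_of_extension
    {R C N M L : Type*} [CommRing R] [Nontrivial R]
    -- `R` is a QF ring
    [IsNoetherianRing R] [Module.Injective R R]
    [AddCommGroup C] [Module R C] [Coalgebra R C]
    -- `C` is projective as an `R`-module
    [Module.Projective R C]
    [AddCommGroup N] [Module R N] [AddCommGroup M] [Module R M]
    [AddCommGroup L] [Module R L]
    (actN : Module.Dual R C →ₗ[R] N →ₗ[R] N)
    (actM : Module.Dual R C →ₗ[R] M →ₗ[R] M)
    (actL : Module.Dual R C →ₗ[R] L →ₗ[R] L)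
    (hN : IsDualModuleAction actN) (hM : IsDualModuleAction actM)
    (hL : IsDualModuleAction actL)
    -- `0 → N → M → L → 0` is an exact sequence of left `C^*`-modules
    (ι : N →ₗ[R] M) (π : M →ₗ[R] L)
    (hι : ∀ (g : Module.Dual R C) (n : N), ι (actN g n) = actM g (ι n))
    (hπ : ∀ (g : Module.Dual R C) (m : M), π (actM g m) = actL g (π m))
    (hinj : Function.Injective ι) (hsurj : Function.Surjective π)
    (hexact : LinearMap.range ι = LinearMap.ker π)
    -- every element of `N` and of `L` is `C`-rational
    (hNrat : ∀ n : N, IsRationalElem actN n)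
    (hLrat : ∀ l : L, IsRationalElem actL l)
    -- for every `l ∈ L` the left ideal `(0:l)` of `C^*` is finitely generated
    -- as a left `C^*`-module
    (hfg : ∀ l : L, ∃ (k : ℕ) (gs : Fin k → Module.Dual R C),
      (∀ i, actL (gs i) l = 0) ∧
      ∀ g : Module.Dual R C, actL g l = 0 →
        ∃ hs : Fin k → Module.Dual R C, g = ∑ i, convProd (hs i) (gs i)) :
    -- then every element of `M` is `C`-rational
    ∀ m : M, IsRationalElem actM m := by
  classical
  intro m
  obtain ⟨n, ls, csL, hls⟩ := hLrat (π m)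
  obtain ⟨k, gs, hgs0, hgs⟩ := hfg (π m)
  -- the maps `δ_s : C → C`, `c ↦ Σ c₁ ⬝ (gs s)(c₂)`
  set dd : Fin k → (C →ₗ[R] C) := fun s =>
    (TensorProduct.rid R C).toLinearMap ∘ₗ LinearMap.lTensor C (gs s) ∘ₗ Coalgebra.comul
    with hdd
  have conv_eq : ∀ (h : Module.Dual R C) (s : Fin k) (c : C),
      convProd h (gs s) c = h (dd s c) := by
    intro h s c
    rw [convProd_apply_eq]
    rfl
  -- choose `ns s ∈ N` with `ι (ns s) = (gs s) ⋆ m`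
  have hns' : ∀ s : Fin k, ∃ x : N, ι x = actM (gs s) m := by
    intro s
    have h0 : π (actM (gs s) m) = 0 := by rw [hπ]; exact hgs0 s
    have h1 : actM (gs s) m ∈ LinearMap.ker π := LinearMap.mem_ker.mpr h0
    rw [← hexact] at h1
    exact h1
  choose ns hns using hns'
  choose ks nm d hd using fun s => hNrat (ns s)
  -- the ambient product module and the key submodules
  set δ : C →ₗ[R] (Fin k → C) := LinearMap.pi dd with hδdef
  set W : Submodule R (Fin k → C) := Submodule.span R
    (Set.range fun p : (Σ s : Fin k, Fin (ks s)) => Pi.single p.1 (d p.1 p.2)) with hWdef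
  set D : Submodule R (Fin k → C) := LinearMap.range δ with hDdef
  -- key computation
  have KC : ∀ hv : Fin k → Module.Dual R C,
      actM (∑ s, convProd (hv s) (gs s)) m = ∑ s, ∑ j, (hv s) (d s j) • ι (nm s j) := by
    intro hv
    rw [map_sum, LinearMap.sum_apply]
    refine Finset.sum_congr rfl fun s _ => ?_
    rw [hM.1, LinearMap.comp_apply, ← hns s, ← hι, hd s (hv s), map_sum]
    exact Finset.sum_congr rfl fun j _ => by rw [map_smul]
  -- `W ⊓ D` is finitely generated
  have hWfg : W.FG := Submodule.fg_span (Set.finite_range _)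
  have hWnoeth : IsNoetherian R W := isNoetherian_of_fg_of_noetherian W hWfg
  have hWDfg : (W ⊓ D).FG := by
    have h1 : ((W ⊓ D).comap W.subtype).FG := IsNoetherian.noetherian _
    have h2 := h1.map W.subtype
    rw [Submodule.map_comap_subtype] at h2
    have h3 : W ⊓ (W ⊓ D) = W ⊓ D := by rw [← inf_assoc, inf_idem]
    rwa [h3] at h2
  obtain ⟨T, hT⟩ := hWDfg
  have hu' : ∀ y ∈ T, ∃ c : C, δ c = y := by
    intro y hy
    have h1 : y ∈ W ⊓ D := by
      rw [← hT]
      exact Submodule.subset_span hy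
    obtain ⟨c, hc⟩ := h1.2
    exact ⟨c, hc⟩
  choose u hu using hu'
  -- the main vanishing statement
  have main : ∀ g : Module.Dual R C, (∀ i, g (csL i) = 0) →
      (∀ y (hy : y ∈ T), g (u y hy) = 0) → actM g m = 0 := by
    intro g hg1 hg2
    have hgl : actL g (π m) = 0 := by
      rw [hls g]
      simp [hg1]
    obtain ⟨hh, hhg⟩ := hgs g hgl
    set H : (Fin k → C) →ₗ[R] R := ∑ s, (hh s) ∘ₗ (LinearMap.proj s) with hHdef
    have Happly : ∀ x : Fin k → C, H x = ∑ s, hh s (x s) := by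
      intro x
      rw [hHdef, LinearMap.sum_apply]
      rfl
    have Hsingle : ∀ (s : Fin k) (x : C), H (Pi.single s x) = hh s x := by
      intro s x
      rw [Happly, Finset.sum_eq_single s]
      · rw [Pi.single_eq_same]
      · intro b _ hb
        rw [Pi.single_eq_of_ne hb, map_zero]
      · intro h
        exact absurd (Finset.mem_univ s) h
    have Hδ : ∀ c : C, H (δ c) = g c := by
      intro c
      rw [Happly, hhg]
      rw [LinearMap.sum_apply]
      refine (Finset.sum_congr rfl fun s _ => ?_).symm
      rw [conv_eq]
      rfl
    have hHker : ∀ x ∈ W ⊓ D, H x = 0 := by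
      have hle : W ⊓ D ≤ LinearMap.ker H := by
        rw [← hT, Submodule.span_le]
        intro y hy
        have hyT : y ∈ T := hy
        have : H (δ (u y hyT)) = g (u y hyT) := Hδ _
        rw [hu y hyT] at this
        exact LinearMap.mem_ker.mpr (this.trans (hg2 y hyT))
      exact fun x hx => LinearMap.mem_ker.mp (hle hx)
    obtain ⟨H', hH'W, hH'D⟩ := exists_extension_vanishing W D H hHker
    set hh' : Fin k → Module.Dual R C := fun s =>
      H' ∘ₗ LinearMap.single R (fun _ : Fin k => C) s with hh'def
    have e1 : (∑ s, convProd (hh' s) (gs s)) = (0 : Module.Dual R C) := by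
      apply LinearMap.ext
      intro c
      rw [LinearMap.sum_apply]
      have step : ∀ s, convProd (hh' s) (gs s) c = H' (Pi.single s (dd s c)) := by
        intro s
        rw [conv_eq]
        rfl
      calc (∑ s, convProd (hh' s) (gs s) c)
          = ∑ s, H' (Pi.single s (dd s c)) := Finset.sum_congr rfl fun s _ => step s
        _ = H' (∑ s, Pi.single s (dd s c)) := (map_sum H' _ _).symm
        _ = H' (δ c) := by rw [Finset.univ_sum_single (fun s => dd s c)]; rfl
        _ = 0 := hH'D _ ⟨c, rfl⟩
    have e2 : ∀ (s : Fin k) (j : Fin (ks s)), hh' s (d s j) = hh s (d s j) := by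
      intro s j
      have hmem : Pi.single s (d s j) ∈ W := by
        rw [hWdef]
        exact Submodule.subset_span ⟨⟨s, j⟩, rfl⟩
      have : hh' s (d s j) = H' (Pi.single s (d s j)) := rfl
      rw [this, hH'W _ hmem, Hsingle]
    calc actM g m = actM (∑ s, convProd (hh s) (gs s)) m := by rw [← hhg]
      _ = ∑ s, ∑ j, (hh s) (d s j) • ι (nm s j) := KC hh
      _ = ∑ s, ∑ j, (hh' s) (d s j) • ι (nm s j) := by
          exact Finset.sum_congr rfl fun s _ => Finset.sum_congr rfl fun j _ => by
            rw [e2 s j]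
      _ = actM (∑ s, convProd (hh' s) (gs s)) m := (KC hh').symm
      _ = 0 := by rw [e1, map_zero, LinearMap.zero_apply]
  -- dual basis of the projective module `C`
  obtain ⟨σ, hσ⟩ := Module.projective_def.mp (inferInstance : Module.Projective R C)
  set p : C → Module.Dual R C := fun j => (Finsupp.lapply j) ∘ₗ σ with hpdef
  set S : Finset C :=
    (Finset.univ.biUnion fun i : Fin n => (σ (csL i)).support)
      ∪ (T.attach.biUnion fun y => (σ (u y.1 y.2)).support) with hSdef
  have key : ∀ (g : Module.Dual R C) (w : C), (σ w).support ⊆ S →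
      (g - ∑ j ∈ S, g j • p j) w = 0 := by
    intro g w hw
    have e : (∑ j ∈ S, g j • p j) w = ∑ j ∈ S, g j * (σ w) j := by
      rw [LinearMap.sum_apply]
      refine Finset.sum_congr rfl fun j _ => ?_
      rw [LinearMap.smul_apply, smul_eq_mul]
      congr 1
    have e2 : ∑ j ∈ S, g j * (σ w) j = ∑ j ∈ (σ w).support, g j * (σ w) j :=
      (Finset.sum_subset hw fun x _ hx => by
        rw [Finsupp.notMem_support_iff.mp hx, mul_zero]).symm
    have e3 : g w = ∑ j ∈ (σ w).support, g j * (σ w) j := by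
      conv_lhs => rw [← hσ w]
      rw [Finsupp.linearCombination_apply, Finsupp.sum, map_sum]
      refine Finset.sum_congr rfl fun j _ => ?_
      rw [map_smul, smul_eq_mul, id]
      exact mul_comm _ _
    rw [LinearMap.sub_apply, e, e2, ← e3, sub_self]
  have sub1 : ∀ i, (σ (csL i)).support ⊆ S := fun i j hj =>
    Finset.mem_union_left _ (Finset.mem_biUnion.mpr ⟨i, Finset.mem_univ i, hj⟩)
  have sub2 : ∀ y (hy : y ∈ T), (σ (u y hy)).support ⊆ S := fun y hy j hj =>
    Finset.mem_union_right _ (Finset.mem_biUnion.mpr ⟨⟨y, hy⟩, Finset.mem_attach _ _, hj⟩)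
  refine ⟨S.card, fun i => actM (p ((S.equivFin.symm i) : C)) m,
    fun i => ((S.equivFin.symm i : C)), fun g => ?_⟩
  have h0 : actM (g - ∑ j ∈ S, g j • p j) m = 0 :=
    main _ (fun i => key g (csL i) (sub1 i)) (fun y hy => key g (u y hy) (sub2 y hy))
  rw [map_sub, LinearMap.sub_apply, sub_eq_zero] at h0
  have h1 : actM g m = ∑ j ∈ S, g j • actM (p j) m := by
    rw [h0, map_sum, LinearMap.sum_apply]
    exact Finset.sum_congr rfl fun j _ => by rw [map_smul, LinearMap.smul_apply]
  rw [h1, ← Finset.sum_coe_sort S (fun j => g j • actM (p j) m)]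
  exact (Fintype.sum_equiv S.equivFin.symm _ _ fun i => rfl).symm
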